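/- Existence-uniqueness for the singular nonlinear IVP: let Re(Λ) > 1/2, f : [0,a] × ℂ → ℂ continuous with |f(z,u)-f(z,v)| ≤ L|u-v|, and y₀ ∈ ℂ. Then the integral equation y(z) = y₀ + (1/(2Λ-1)) ∫₀^z [1 - (t/z)^{2Λ-1}] f(t, y(t)) dt has a unique continuous solution y on [0,a], and the iterates yⁿ⁺¹ = y₀ + S yⁿ, y⁰ ≡ y₀, converge uniformly to y with |y(z) - yⁿ(z)| ≤ (2zL/|2Λ-1|)ⁿ/n! · ‖y - y₀‖_∞. -/

import Mathlib

/-!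
Write `K = 2L/|2Λ-1|`. Since `Re(2Λ-1) > 0`, the kernel satisfies `|1 - (t/z)^(2Λ-1)| ≤ 2` for
`0 ≤ t ≤ z`, so `|S u z - S v z| ≤ K ∫₀^z |u - v|`. Iterating this Volterra estimate, a pointwise
bound `|u - v| ≤ C` propagates through `n` Picard steps as `C (Kz)ⁿ/n!`. The series of successive
differences of the iterates is therefore dominated by `C (Ka)ⁿ/n!` and converges uniformly; its
limit is a fixed point, the same estimate applied to two fixed points forces them to agree, and
applied to the limit and the `n`-th iterate it gives the error bound. Continuity of `S u` at
`z = 0` comes from the substitution `t = zs`, which turns `S u z` into `z/(2Λ-1)` times an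
integral over `[0, 1]` depending continuously on `z`.
-/

open Set Filter MeasureTheory intervalIntegral
open scoped Nat Topology

noncomputable def volterraOp (W : ℂ) (f : ℝ → ℂ → ℂ) (u : ℝ → ℂ) (z : ℝ) : ℂ :=
  1 / W * ∫ t in (0 : ℝ)..z, (1 - ((t / z : ℝ) : ℂ) ^ W) * f t (u t)

def VolterraLipschitzOn {E : Type*} [NormedAddCommGroup E] (S : (ℝ → E) → ℝ → E) (a K : ℝ) :
    Prop :=
  ∀ u v, ContinuousOn u (Icc 0 a) → ContinuousOn v (Icc 0 a) → ∀ z ∈ Icc 0 a,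
    ∀ g : ℝ → ℝ, Continuous g → (∀ t ∈ Icc 0 z, ‖u t - v t‖ ≤ g t) →
      ‖S u z - S v z‖ ≤ K * ∫ t in (0 : ℝ)..z, g t

lemma mul_integral_mul_pow_div_factorial (K C z : ℝ) (n : ℕ) :
    K * ∫ t in (0 : ℝ)..z, C * ((K * t) ^ n / n !) = C * ((K * z) ^ (n + 1) / (n + 1)!) := by
  have hpoly : (fun t => C * ((K * t) ^ n / n !)) = fun t => C * K ^ n / n ! * t ^ n := by
    funext t
    ring
  rw [hpoly, intervalIntegral.integral_const_mul, integral_pow, Nat.factorial_succ]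
  push_cast
  field_simp
  ring

namespace VolterraLipschitzOn

variable {E : Type*} [NormedAddCommGroup E] {S : (ℝ → E) → ℝ → E} {a K : ℝ} {y₀ : E}

theorem norm_sub_le_of_iterate (hS : VolterraLipschitzOn S a K) {u v : ℕ → ℝ → E}
    (hu_cont : ∀ n, ContinuousOn (u n) (Icc 0 a)) (hv_cont : ∀ n, ContinuousOn (v n) (Icc 0 a))
    (hu : ∀ n, EqOn (u (n + 1)) (fun z => y₀ + S (u n) z) (Icc 0 a))
    (hv : ∀ n, EqOn (v (n + 1)) (fun z => y₀ + S (v n) z) (Icc 0 a))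
    {C : ℝ} (h0 : ∀ z ∈ Icc 0 a, ‖u 0 z - v 0 z‖ ≤ C) (n : ℕ) :
    ∀ z ∈ Icc 0 a, ‖u n z - v n z‖ ≤ C * ((K * z) ^ n / n !) := by
  induction n with
  | zero => simpa using h0
  | succ n ih =>
    intro z hz
    rw [hu n hz, hv n hz, add_sub_add_left_eq_sub, ← mul_integral_mul_pow_div_factorial]
    exact hS _ _ (hu_cont n) (hv_cont n) z hz _ (by fun_prop)
      fun t ht => ih t ⟨ht.1, ht.2.trans hz.2⟩

theorem eqOn_of_eqOn_add (hS : VolterraLipschitzOn S a K) {u v : ℝ → E}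
    (hu_cont : ContinuousOn u (Icc 0 a)) (hv_cont : ContinuousOn v (Icc 0 a))
    (hu : EqOn u (fun z => y₀ + S u z) (Icc 0 a)) (hv : EqOn v (fun z => y₀ + S v z) (Icc 0 a)) :
    EqOn u v (Icc 0 a) := by
  obtain ⟨C, hC⟩ := isCompact_Icc.exists_bound_of_continuousOn (hu_cont.sub hv_cont)
  intro z hz
  have hbound (n : ℕ) : ‖u z - v z‖ ≤ C * ((K * z) ^ n / n !) :=
    hS.norm_sub_le_of_iterate (u := fun _ => u) (v := fun _ => v) (fun _ => hu_cont)
      (fun _ => hv_cont) (fun _ => hu) (fun _ => hv) hC n z hz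
  have hlim : Tendsto (fun n : ℕ => C * ((K * z) ^ n / n !)) atTop (𝓝 0) := by
    simpa using (FloorSemiring.tendsto_pow_div_factorial_atTop (K * z)).const_mul C
  rw [← sub_eq_zero, ← norm_le_zero_iff]
  exact ge_of_tendsto' hlim hbound

theorem exists_tendstoUniformlyOn [CompleteSpace E] (hS : VolterraLipschitzOn S a K) (hK : 0 ≤ K)
    {Y : ℕ → ℝ → E} (hY_cont : ∀ n, ContinuousOn (Y n) (Icc 0 a))
    (hY : ∀ n, EqOn (Y (n + 1)) (fun z => y₀ + S (Y n) z) (Icc 0 a)) :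
    ∃ y, TendstoUniformlyOn Y y atTop (Icc 0 a) := by
  obtain ⟨C, hC⟩ := isCompact_Icc.exists_bound_of_continuousOn ((hY_cont 1).sub (hY_cont 0))
  have hdiff (n : ℕ) : ∀ z ∈ Icc 0 a, ‖Y (n + 1) z - Y n z‖ ≤ C * ((K * a) ^ n / n !) := by
    intro z hz
    have hC0 : 0 ≤ C := (norm_nonneg _).trans (hC z hz)
    calc ‖Y (n + 1) z - Y n z‖ ≤ C * ((K * z) ^ n / n !) :=
          hS.norm_sub_le_of_iterate (u := fun n => Y (n + 1)) (fun n => hY_cont (n + 1)) hY_cont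
            (fun n => hY (n + 1)) hY hC n z hz
      _ ≤ C * ((K * a) ^ n / n !) := by
          have hz0 : 0 ≤ z := hz.1
          gcongr
          exact hz.2
  refine ⟨fun z => Y 0 z + ∑' n, (Y (n + 1) z - Y n z), ?_⟩
  have hsum := tendstoUniformlyOn_tsum_nat
    ((Real.summable_pow_div_factorial (K * a)).mul_left C) hdiff
  rw [Metric.tendstoUniformlyOn_iff] at hsum ⊢
  intro ε hε
  filter_upwards [hsum ε hε] with n hn z hz
  have hnz := hn z hz
  rw [Finset.sum_range_sub (fun k => Y k z)] at hnz
  rwa [← dist_add_left (Y 0 z), add_sub_cancel] at hnz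

theorem eqOn_add_of_tendstoUniformlyOn (hS : VolterraLipschitzOn S a K) {Y : ℕ → ℝ → E}
    {y : ℝ → E} (hY_cont : ∀ n, ContinuousOn (Y n) (Icc 0 a))
    (hY : ∀ n, EqOn (Y (n + 1)) (fun z => y₀ + S (Y n) z) (Icc 0 a))
    (hYy : TendstoUniformlyOn Y y atTop (Icc 0 a)) :
    EqOn y (fun z => y₀ + S y z) (Icc 0 a) := by
  intro z hz
  have hy_cont := hYy.continuousOn (Frequently.of_forall hY_cont)
  have hSY : Tendsto (fun n => S (Y n) z) atTop (𝓝 (S y z)) := by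
    refine Metric.tendsto_nhds.2 fun ε hε => ?_
    have hδ : 0 < ε / (|K * z| + 1) := by positivity
    filter_upwards [Metric.tendstoUniformlyOn_iff.1 hYy _ hδ] with n hn
    have hclose : ∀ t ∈ Icc 0 z, ‖Y n t - y t‖ ≤ ε / (|K * z| + 1) := fun t ht => by
      rw [← dist_eq_norm, dist_comm]
      exact (hn t ⟨ht.1, ht.2.trans hz.2⟩).le
    rw [dist_eq_norm]
    calc ‖S (Y n) z - S y z‖ ≤ K * ∫ _ in (0 : ℝ)..z, ε / (|K * z| + 1) :=
          hS _ _ (hY_cont n) hy_cont z hz _ continuous_const hclose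
      _ ≤ |K * z| * (ε / (|K * z| + 1)) := by
          rw [intervalIntegral.integral_const, smul_eq_mul, sub_zero, ← mul_assoc]
          gcongr
          exact le_abs_self _
      _ < ε := by
          rw [mul_div_assoc', div_lt_iff₀ (by positivity)]
          nlinarith
  refine tendsto_nhds_unique ((hYy.tendsto_at hz).comp (tendsto_add_atTop_nat 1)) ?_
  refine (tendsto_const_nhds.add hSY).congr fun n => ?_
  exact (hY n hz).symm

end VolterraLipschitzOn

section VolterraKernel

variable {W : ℂ}

lemma norm_one_sub_ofReal_cpow_le_two (hW : 0 < W.re) {r : ℝ} (h0 : 0 ≤ r) (h1 : r ≤ 1) :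
    ‖1 - (r : ℂ) ^ W‖ ≤ 2 := by
  calc ‖1 - (r : ℂ) ^ W‖ ≤ ‖(1 : ℂ)‖ + ‖(r : ℂ) ^ W‖ := norm_sub_le _ _
    _ ≤ 1 + 1 := by
      rw [norm_one, Complex.norm_cpow_eq_rpow_re_of_nonneg h0 hW.ne']
      gcongr
      exact Real.rpow_le_one h0 h1 hW.le
    _ = 2 := by norm_num

lemma intervalIntegrable_volterraKernel_mul (hW : 0 < W.re) {F : ℝ → ℂ} {z : ℝ} (hz : 0 ≤ z)
    (hF : ContinuousOn F (Icc 0 z)) :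
    IntervalIntegrable (fun t => (1 - ((t / z : ℝ) : ℂ) ^ W) * F t) volume 0 z := by
  refine ContinuousOn.intervalIntegrable ?_
  rw [uIcc_of_le hz]
  exact (continuous_const.sub ((Complex.continuous_ofReal_cpow_const hW).comp
    (continuous_id.div_const z))).continuousOn.mul hF

lemma integral_volterraKernel_mul_eq (F : ℝ → ℂ) (z : ℝ) :
    ∫ t in (0 : ℝ)..z, (1 - ((t / z : ℝ) : ℂ) ^ W) * F t =
      z • ∫ s in (0 : ℝ)..1, (1 - (s : ℂ) ^ W) * F (z * s) := by
  rcases eq_or_ne z 0 with rfl | hz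
  · simp
  have hcomp := intervalIntegral.integral_comp_mul_left
    (fun t => (1 - ((t / z : ℝ) : ℂ) ^ W) * F t) (a := 0) (b := 1) hz
  simp only [mul_div_cancel_left₀ _ hz, mul_zero, mul_one] at hcomp
  rw [hcomp, smul_inv_smul₀ hz]

end VolterraKernel

section VolterraOp

variable {W : ℂ} {a L : ℝ} {f : ℝ → ℂ → ℂ}

lemma continuousOn_volterraOp (hW : 0 < W.re) (ha : 0 ≤ a)
    (hfc : ContinuousOn (fun p : ℝ × ℂ => f p.1 p.2) (Icc 0 a ×ˢ univ))
    {u : ℝ → ℂ} (hu : ContinuousOn u (Icc 0 a)) :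
    ContinuousOn (volterraOp W f u) (Icc 0 a) := by
  have hfu : ContinuousOn (fun t => f t (u t)) (Icc 0 a) :=
    hfc.comp (continuousOn_id.prodMk hu) fun t ht => ⟨ht, mem_univ _⟩
  set F : ℝ → ℂ := fun t => f (projIcc 0 a ha t) (u (projIcc 0 a ha t))
  have hF : Continuous F :=
    hfu.comp_continuous (continuous_subtype_val.comp continuous_projIcc) fun t => Subtype.mem _
  have hcont : Continuous fun z : ℝ =>
      1 / W * (z • ∫ s in (0 : ℝ)..1, (1 - (s : ℂ) ^ W) * F (z * s)) := by
    refine continuous_const.mul (continuous_id.smul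
      (continuous_parametric_intervalIntegral_of_continuous' ?_ 0 1))
    exact (continuous_const.sub ((Complex.continuous_ofReal_cpow_const hW).comp continuous_snd)).mul
      (hF.comp (continuous_fst.mul continuous_snd))
  refine hcont.continuousOn.congr fun z hz => ?_
  rw [volterraOp, integral_volterraKernel_mul_eq]
  congr 2
  refine intervalIntegral.integral_congr fun s hs => ?_
  rw [uIcc_of_le zero_le_one] at hs
  have hzs : z * s ∈ Icc 0 a :=
    ⟨mul_nonneg hz.1 hs.1, (mul_le_of_le_one_right hz.1 hs.2).trans hz.2⟩
  simp [F, projIcc_of_mem ha hzs]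

lemma volterraLipschitzOn_volterraOp (hW : 0 < W.re) (hL : 0 ≤ L)
    (hfc : ContinuousOn (fun p : ℝ × ℂ => f p.1 p.2) (Icc 0 a ×ˢ univ))
    (hflip : ∀ z ∈ Icc (0 : ℝ) a, ∀ u v : ℂ, ‖f z u - f z v‖ ≤ L * ‖u - v‖) :
    VolterraLipschitzOn (volterraOp W f) a (2 * L / ‖W‖) := by
  intro u v hu hv z hz g hg hug
  have hfw {w : ℝ → ℂ} (hw : ContinuousOn w (Icc 0 a)) :
      ContinuousOn (fun t => f t (w t)) (Icc 0 z) :=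
    (hfc.comp (continuousOn_id.prodMk hw) fun t ht => ⟨ht, mem_univ _⟩).mono
      (Icc_subset_Icc_right hz.2)
  have hpt : ∀ t ∈ Ioc 0 z, ‖(1 - ((t / z : ℝ) : ℂ) ^ W) * f t (u t) -
      (1 - ((t / z : ℝ) : ℂ) ^ W) * f t (v t)‖ ≤ 2 * L * g t := by
    intro t ht
    rw [← mul_sub, norm_mul, mul_assoc]
    refine mul_le_mul (norm_one_sub_ofReal_cpow_le_two hW (div_nonneg ht.1.le (ht.1.le.trans ht.2))
      ((div_le_one (ht.1.trans_le ht.2)).2 ht.2)) ?_ (norm_nonneg _) zero_le_two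
    exact (hflip t ⟨ht.1.le, ht.2.trans hz.2⟩ _ _).trans
      (mul_le_mul_of_nonneg_left (hug t (Ioc_subset_Icc_self ht)) hL)
  calc ‖volterraOp W f u z - volterraOp W f v z‖
      = ‖W‖⁻¹ * ‖∫ t in (0 : ℝ)..z, ((1 - ((t / z : ℝ) : ℂ) ^ W) * f t (u t) -
          (1 - ((t / z : ℝ) : ℂ) ^ W) * f t (v t))‖ := by
        rw [volterraOp, volterraOp, ← mul_sub, ← integral_sub
          (intervalIntegrable_volterraKernel_mul hW hz.1 (hfw hu))
          (intervalIntegrable_volterraKernel_mul hW hz.1 (hfw hv)), norm_mul, one_div, norm_inv]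
    _ ≤ ‖W‖⁻¹ * ∫ t in (0 : ℝ)..z, 2 * L * g t := by
        gcongr
        exact norm_integral_le_of_norm_le hz.1 (ae_of_all _ hpt)
          ((hg.const_mul _).intervalIntegrable _ _)
    _ = 2 * L / ‖W‖ * ∫ t in (0 : ℝ)..z, g t := by
        rw [intervalIntegral.integral_const_mul]
        ring

end VolterraOp

/-- Existence-uniqueness for the singular nonlinear IVP: with
`Re Λ > 1/2` and `f` continuous and `L`-Lipschitz in its second variable, the
integral equation `y z = y₀ + (1/(2Λ-1)) ∫₀^z [1-(t/z)^(2Λ-1)] f(t, y t) dt`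
has a unique continuous solution on `[0,a]`, and the Picard iterates
`yⁿ⁺¹ = y₀ + S yⁿ`, `y⁰ ≡ y₀`, converge uniformly to it with
`|y z - yⁿ z| ≤ (2zL/|2Λ-1|)ⁿ/n! · ‖y - y₀‖_∞`. -/
theorem nonlinear_existence_uniqueness
    (Λ : ℂ) (hΛ : 1 / 2 < Λ.re) (a L : ℝ) (ha : 0 < a) (hL : 0 ≤ L)
    (f : ℝ → ℂ → ℂ)
    (hfc : ContinuousOn (fun p : ℝ × ℂ => f p.1 p.2) (Set.Icc 0 a ×ˢ Set.univ))
    (hflip : ∀ z ∈ Set.Icc (0 : ℝ) a, ∀ u v : ℂ,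
      ‖f z u - f z v‖ ≤ L * ‖u - v‖)
    (y₀ : ℂ)
    (S : (ℝ → ℂ) → (ℝ → ℂ))
    (hS : ∀ u z, S u z = (1 / (2 * Λ - 1)) *
      ∫ t in (0 : ℝ)..z, (1 - (((t / z : ℝ)) : ℂ) ^ (2 * Λ - 1)) * f t (u t))
    (Y : ℕ → ℝ → ℂ) (hY0 : Y 0 = fun _ => y₀)
    (hYs : ∀ n, Y (n + 1) = fun z => y₀ + S (Y n) z) :
    ∃ y : ℝ → ℂ, ContinuousOn y (Set.Icc 0 a) ∧
      (∀ z ∈ Set.Icc (0 : ℝ) a, y z = y₀ + S y z) ∧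
      (∀ y' : ℝ → ℂ, ContinuousOn y' (Set.Icc 0 a) →
        (∀ z ∈ Set.Icc (0 : ℝ) a, y' z = y₀ + S y' z) →
        Set.EqOn y' y (Set.Icc 0 a)) ∧
      TendstoUniformlyOn Y y Filter.atTop (Set.Icc 0 a) ∧
      (∀ n : ℕ, 1 ≤ n → ∀ z ∈ Set.Icc (0 : ℝ) a,
        ‖y z - Y n z‖ ≤
          (2 * z * L / ‖2 * Λ - 1‖) ^ n / n.factorial *
            (⨆ t : Set.Icc (0 : ℝ) a, ‖y t - y₀‖)) := by
  have hW : 0 < (2 * Λ - 1).re := by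
    simp only [Complex.sub_re, Complex.mul_re, Complex.re_ofNat, Complex.im_ofNat, zero_mul,
      sub_zero, Complex.one_re]
    linarith
  obtain rfl : S = volterraOp (2 * Λ - 1) f := funext fun u => funext (hS u)
  have hS_lip := volterraLipschitzOn_volterraOp hW hL hfc hflip
  have hY_cont (n : ℕ) : ContinuousOn (Y n) (Icc 0 a) := by
    induction n with
    | zero => rw [hY0]; exact continuousOn_const
    | succ n ih =>
      rw [hYs n]
      exact continuousOn_const.add (continuousOn_volterraOp hW ha.le hfc ih)
  have hY (n : ℕ) :
      EqOn (Y (n + 1)) (fun z => y₀ + volterraOp (2 * Λ - 1) f (Y n) z) (Icc 0 a) := by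
    rw [hYs n]
    exact eqOn_refl _ _
  obtain ⟨y, hYy⟩ := hS_lip.exists_tendstoUniformlyOn (by positivity) hY_cont hY
  have hy_cont := hYy.continuousOn (Frequently.of_forall hY_cont)
  have hy := hS_lip.eqOn_add_of_tendstoUniformlyOn hY_cont hY hYy
  refine ⟨y, hy_cont, fun z hz => hy hz, fun y' hy'_cont hy' =>
    hS_lip.eqOn_of_eqOn_add hy'_cont hy_cont (fun z hz => hy' z hz) hy, hYy, fun n _ z hz => ?_⟩
  have hbdd : BddAbove (range fun t : Icc (0 : ℝ) a => ‖y t - y₀‖) :=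
    (isCompact_range (hy_cont.sub continuousOn_const).norm.domRestrict).bddAbove
  calc ‖y z - Y n z‖
      ≤ (⨆ t : Icc (0 : ℝ) a, ‖y t - y₀‖) * ((2 * L / ‖2 * Λ - 1‖ * z) ^ n / n !) :=
        hS_lip.norm_sub_le_of_iterate (u := fun _ => y) (fun _ => hy_cont) hY_cont (fun _ => hy) hY
          (fun t ht => by rw [hY0]; exact le_ciSup hbdd ⟨t, ht⟩) n z hz
    _ = _ := by ring
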